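/- arXiv:1205.5009 — 5 statements merged into one kernel-verified Lean document; each statement's English description precedes it below -/
import Mathlib

section
/- Let G be a locally finite group, φ: G → G an endomorphism, and F a finite subgroup of G. Then the sequence of indices [T_{n+1}(φ,F) : T_n(φ,F)] is eventually constant: there exist n₀ > 0 and an integer α ≥ 1 such that [T_{n+1}(φ,F) : T_n(φ,F)] = α for all n ≥ n₀, and consequently H_alg(φ,F) = lim_n log|T_n(φ,F)|/n = log α. -/
/-! Write `Tₙ` for the trajectory `F ⊔ φ F ⊔ ⋯ ⊔ φⁿ⁻¹ F`, a finite subgroup by local finiteness.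
Since `Tₙ₊₂ = F ⊔ φ Tₙ₊₁` with `F` normal and contained in `Tₙ₊₁`,
`[Tₙ₊₂ : Tₙ₊₁] = [φ Tₙ₊₁ : φ Tₙ₊₁ ⊓ Tₙ₊₁] ≤ [φ Tₙ₊₁ : φ Tₙ] ≤ [Tₙ₊₁ : Tₙ]`.
A non-increasing sequence of positive integers is eventually a constant `α`, after which
`log |Tₙ|` grows by `log α` per step, so `log |Tₙ| / n → log α`. -/

open Filter Topology

theorem tendsto_div_natCast_of_tendsto_sub {u : ℕ → ℝ} {l : ℝ}
    (h : Tendsto (fun n => u (n + 1) - u n) atTop (𝓝 l)) :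
    Tendsto (fun n => u n / n) atTop (𝓝 l) := by
  have key : (fun n : ℕ => u 0 / n + (n⁻¹ : ℝ) * ∑ i ∈ Finset.range n, (u (i + 1) - u i)) =
      fun n => u n / n := by
    funext n
    rw [Finset.sum_range_sub]
    ring
  simpa only [key, zero_add] using (tendsto_const_div_atTop_nhds_zero_nat (u 0)).add h.cesaro

namespace Subgroup

variable {G G' : Type*} [Group G] [Group G']

theorem card_mul_relIndex {H K : Subgroup G} (h : H ≤ K) :
    Nat.card H * H.relIndex K = Nat.card K := by
  simpa only [relIndex_bot_left] using relIndex_mul_relIndex ⊥ H K bot_le h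

theorem relIndex_ne_zero_of_finite {H K : Subgroup G} (hK : (K : Set G).Finite) :
    H.relIndex K ≠ 0 :=
  have : Finite K := hK.to_subtype
  ne_zero_of_dvd_ne_zero Nat.card_pos.ne' (relIndex_dvd_card H K)

theorem relIndex_map_map_le (f : G →* G') {H K : Subgroup G} (h : H.relIndex K ≠ 0) :
    (H.map f).relIndex (K.map f) ≤ H.relIndex K := by
  rw [← relIndex_comap]
  exact relIndex_le_of_le_left (le_comap_map f H) h

theorem relIndex_normal_sup_of_le {N H : Subgroup G} [N.Normal] (hNH : N ≤ H) (K : Subgroup G) :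
    H.relIndex (N ⊔ K) = H.relIndex K := by
  have hH : (H.map (QuotientGroup.mk' N)).comap (QuotientGroup.mk' N) = H := by
    rw [comap_map_eq, QuotientGroup.ker_mk', sup_eq_left.2 hNH]
  rw [← hH, relIndex_comap, relIndex_comap, map_sup, QuotientGroup.map_mk'_self, bot_sup_eq]

theorem sup_finite_of_locallyFinite
    (hLF : ∀ s : Finset G, ((closure (s : Set G) : Subgroup G) : Set G).Finite)
    {H K : Subgroup G} (hH : (H : Set G).Finite) (hK : (K : Set G).Finite) :
    ((H ⊔ K : Subgroup G) : Set G).Finite := by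
  simpa only [Set.Finite.coe_toFinset, closure_union, closure_eq] using hLF (hH.union hK).toFinset

def trajectory (F : Subgroup G) (φ : Monoid.End G) (n : ℕ) : Subgroup G :=
  ⨆ i ∈ Finset.range n, F.map (φ ^ i : G →* G)

variable (F : Subgroup G) (φ : Monoid.End G)

theorem trajectory_zero : F.trajectory φ 0 = ⊥ := by
  simp [trajectory]

theorem trajectory_succ (n : ℕ) :
    F.trajectory φ (n + 1) = F ⊔ (F.trajectory φ n).map (φ : G →* G) := by
  have map_pow_succ (i : ℕ) :
      F.map (φ ^ (i + 1) : G →* G) = (F.map (φ ^ i : G →* G)).map (φ : G →* G) := by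
    rw [pow_succ']
    exact (map_map _ _ _).symm
  simp only [trajectory, Finset.mem_range, Nat.iSup_lt_succ', map_pow_succ]
  congr 1
  · exact map_id F
  · exact ((Subgroup.map_iSup _ _).trans (iSup_congr fun i => Subgroup.map_iSup _ _)).symm

theorem trajectory_mono : Monotone (F.trajectory φ) := fun _ _ h =>
  biSup_mono fun _ hi => Finset.range_subset_range.2 h hi

theorem le_trajectory {n : ℕ} (hn : 0 < n) : F ≤ F.trajectory φ n := by
  obtain ⟨m, rfl⟩ := Nat.exists_eq_add_one.2 hn
  exact le_sup_left.trans (trajectory_succ F φ m).ge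

theorem trajectory_finite
    (hLF : ∀ s : Finset G, ((closure (s : Set G) : Subgroup G) : Set G).Finite)
    (hF : (F : Set G).Finite) (n : ℕ) : (F.trajectory φ n : Set G).Finite := by
  induction n with
  | zero => simp [trajectory_zero]
  | succ n ih =>
    rw [trajectory_succ]
    exact sup_finite_of_locallyFinite hLF hF (ih.image _)

theorem relIndex_trajectory_succ_le [F.Normal] {n : ℕ}
    (hfin : (F.trajectory φ (n + 1) : Set G).Finite) :
    (F.trajectory φ (n + 1)).relIndex (F.trajectory φ (n + 2)) ≤
      (F.trajectory φ n).relIndex (F.trajectory φ (n + 1)) := by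
  set A := F.trajectory φ (n + 1)
  set B := F.trajectory φ n
  have hBA : B.map (φ : G →* G) ≤ A := le_sup_right.trans (trajectory_succ F φ n).ge
  calc A.relIndex (F.trajectory φ (n + 2))
      = A.relIndex (A.map (φ : G →* G)) := by
        rw [trajectory_succ, relIndex_normal_sup_of_le (le_trajectory F φ n.succ_pos)]
    _ ≤ (B.map (φ : G →* G)).relIndex (A.map (φ : G →* G)) :=
        relIndex_le_of_le_left hBA (relIndex_ne_zero_of_finite (hfin.image _))
    _ ≤ B.relIndex A := relIndex_map_map_le _ (relIndex_ne_zero_of_finite hfin)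

end Subgroup

/-- `G` locally finite, `φ` an endomorphism, `F` a finite normal subgroup,
`T_n(φ,F) = F·φ(F)·…·φ^{n-1}(F)`.  The indices `[T_{n+1} : T_n]` are eventually constant:
there are `n₀ > 0` and `α ≥ 1` with `[T_{n+1} : T_n] = α` for all `n ≥ n₀`, and
`H_alg(φ,F) = lim_n log|T_n|/n = log α`. -/
theorem statement3 {G : Type*} [Group G]
    (hLF : ∀ s : Finset G, ((Subgroup.closure (s : Set G) : Subgroup G) : Set G).Finite)
    (φ : Monoid.End G) (F : Subgroup G) [F.Normal] (hFfin : (F : Set G).Finite) :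
    ∃ n₀ : ℕ, 0 < n₀ ∧ ∃ α : ℕ, 1 ≤ α ∧
      (∀ n ≥ n₀,
        ((⨆ i ∈ Finset.range n, F.map (φ ^ i : G →* G) : Subgroup G).relIndex
          (⨆ i ∈ Finset.range (n + 1), F.map (φ ^ i : G →* G) : Subgroup G)) = α) ∧
      Tendsto
        (fun n : ℕ =>
          Real.log (Nat.card (⨆ i ∈ Finset.range n, F.map (φ ^ i : G →* G) : Subgroup G)) / n)
        atTop (𝓝 (Real.log α)) := by
  set T := F.trajectory φ
  set a : ℕ → ℕ := fun n => (T n).relIndex (T (n + 1))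
  have hfin (n : ℕ) : (T n : Set G).Finite := F.trajectory_finite φ hLF hFfin n
  have ha_ne (n : ℕ) : a n ≠ 0 := Subgroup.relIndex_ne_zero_of_finite (hfin (n + 1))
  obtain ⟨N, hN⟩ := WellFoundedLT.antitone_chain_condition <|
    antitone_nat_of_succ_le (f := a) fun n => F.relIndex_trajectory_succ_le φ (hfin (n + 1))
  refine ⟨N + 1, N.succ_pos, a N, Nat.one_le_iff_ne_zero.2 (ha_ne N),
    fun n hn => (hN n (by omega)).symm, ?_⟩
  have hcard_ne (n : ℕ) : (Nat.card (T n) : ℝ) ≠ 0 := by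
    have : Finite (T n) := (hfin n).to_subtype
    exact_mod_cast Nat.card_pos.ne'
  have log_card_succ (n : ℕ) :
      Real.log (Nat.card (T (n + 1))) - Real.log (Nat.card (T n)) = Real.log (a n) := by
    rw [← Subgroup.card_mul_relIndex (F.trajectory_mono φ n.le_succ), Nat.cast_mul,
      Real.log_mul (hcard_ne n) (Nat.cast_ne_zero.2 (ha_ne n)), add_sub_cancel_left]
  refine tendsto_div_natCast_of_tendsto_sub (tendsto_const_nhds.congr' ?_)
  filter_upwards [eventually_ge_atTop N] with n hn
  rw [hN n hn]
  exact (log_card_succ n).symm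
end

section
/- Let K be a compact group, ψ: K → K a continuous endomorphism, and U an open normal subgroup of K. For n > 0 let C_n = C_n(ψ,U) and α_n = [C_n : C_{n+1}]. Then α_{n+1} divides α_n for every n > 0; in particular the sequence (α_n) is eventually constant. -/
/-! Write `C n` for `cotrajectory ψ U n`. `ψ` maps `C (n+1)` into `C n`, and an element of
`C (n+1) ≤ U` lies in `C (n+2)` exactly when its image lies in `C (n+1)`. Hence
`[C (n+1) : C (n+2)] = [ψ (C (n+1)) : ψ (C (n+1)) ⊓ C (n+1)]`, the order of the image of
`ψ (C (n+1))` in the group `C n / C (n+1)`, which divides `[C n : C (n+1)]`.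
A sequence of naturals each dividing its predecessor is antitone for divisibility, a
well-founded order on `ℕ` with `0` at the top, so it is eventually constant. -/

namespace Subgroup

variable {G : Type*} [Group G]

theorem relIndex_dvd_relIndex_of_normal {H K L : Subgroup G} [H.Normal] (hHL : H ≤ L)
    (hKL : K ≤ L) : H.relIndex K ∣ H.relIndex L := by
  rw [← relIndex_sup_right K H]
  exact Dvd.intro _ (relIndex_mul_relIndex H (K ⊔ H) L le_sup_right (sup_le hKL hHL))

def cotrajectory (ψ : Monoid.End G) (U : Subgroup G) (n : ℕ) : Subgroup G :=
  ⨅ i ∈ Finset.range n, U.comap (ψ ^ i : G →* G)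

variable (ψ : Monoid.End G) (U : Subgroup G)

theorem mem_cotrajectory {n : ℕ} {x : G} :
    x ∈ cotrajectory ψ U n ↔ ∀ i < n, (ψ ^ i) x ∈ U := by
  simp only [cotrajectory, mem_iInf, Finset.mem_range]
  rfl

theorem cotrajectory_succ (n : ℕ) :
    cotrajectory ψ U (n + 1) = U ⊓ (cotrajectory ψ U n).comap (ψ : G →* G) := by
  ext x
  rw [mem_inf, mem_cotrajectory, Nat.forall_lt_succ_left]
  exact and_congr Iff.rfl (mem_cotrajectory ψ U).symm

theorem cotrajectory_succ_le_left (n : ℕ) : cotrajectory ψ U (n + 1) ≤ U :=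
  (cotrajectory_succ ψ U n).trans_le inf_le_left

theorem cotrajectory_succ_le_comap (n : ℕ) :
    cotrajectory ψ U (n + 1) ≤ (cotrajectory ψ U n).comap (ψ : G →* G) :=
  (cotrajectory_succ ψ U n).trans_le inf_le_right

theorem cotrajectory_antitone : Antitone (cotrajectory ψ U) :=
  antitone_nat_of_succ_le fun n x hx =>
    (mem_cotrajectory ψ U).2 fun i hi => (mem_cotrajectory ψ U).1 hx i (by omega)

instance cotrajectory_normal [hU : U.Normal] (n : ℕ) : (cotrajectory ψ U n).Normal where
  conj_mem x hx g := (mem_cotrajectory ψ U).2 fun i hi => by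
    simpa only [map_mul, map_inv] using
      hU.conj_mem _ ((mem_cotrajectory ψ U).1 hx i hi) ((ψ ^ i) g)

theorem relIndex_cotrajectory_add_two (n : ℕ) :
    (cotrajectory ψ U (n + 2)).relIndex (cotrajectory ψ U (n + 1)) =
      (cotrajectory ψ U (n + 1)).relIndex ((cotrajectory ψ U (n + 1)).map (ψ : G →* G)) := by
  rw [← relIndex_comap (f := ψ), ← inf_relIndex_right, cotrajectory_succ ψ U (n + 1),
    inf_comm U, inf_assoc, inf_eq_right.2 (cotrajectory_succ_le_left ψ U n), inf_relIndex_right]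

theorem relIndex_cotrajectory_succ_dvd [U.Normal] (n : ℕ) :
    (cotrajectory ψ U (n + 2)).relIndex (cotrajectory ψ U (n + 1)) ∣
      (cotrajectory ψ U (n + 1)).relIndex (cotrajectory ψ U n) := by
  rw [relIndex_cotrajectory_add_two]
  exact relIndex_dvd_relIndex_of_normal (cotrajectory_antitone ψ U n.le_succ)
    (map_le_iff_le_comap.2 (cotrajectory_succ_le_comap ψ U n))

end Subgroup

theorem Nat.exists_eventually_eq_of_succ_dvd {a : ℕ → ℕ} (h : ∀ n, a (n + 1) ∣ a n) :
    ∃ n₀, ∀ n ≥ n₀, a n = a n₀ := by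
  have : WellFoundedLT (Associates ℕ) := WfDvdMonoid.wellFoundedLT_associates
  obtain ⟨n₀, hn₀⟩ :=
    WellFoundedLT.antitone_chain_condition (f := fun n => Associates.mk (a n))
      (antitone_nat_of_succ_le fun n => Associates.mk_le_mk_iff_dvd.2 (h n))
  exact ⟨n₀, fun n hn => (Associates.mk_injective (hn₀ n hn)).symm⟩

theorem statement5_general {K : Type*} [Group K]
    (ψ : Monoid.End K)
    (U : Subgroup K) [U.Normal]
    (α : ℕ → ℕ)
    (hα : ∀ n : ℕ,
      α n = ((⨅ i ∈ Finset.range (n + 1), U.comap (ψ ^ i : K →* K) : Subgroup K).relIndex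
        (⨅ i ∈ Finset.range n, U.comap (ψ ^ i : K →* K) : Subgroup K))) :
    (∀ n : ℕ, 0 < n → α (n + 1) ∣ α n) ∧
    ∃ n₀ : ℕ, ∃ a : ℕ, ∀ n ≥ n₀, α n = a := by
  have hdvd : ∀ n, α (n + 1) ∣ α n := fun n => by
    rw [hα, hα]
    exact Subgroup.relIndex_cotrajectory_succ_dvd ψ U n
  obtain ⟨n₀, hn₀⟩ := Nat.exists_eventually_eq_of_succ_dvd hdvd
  exact ⟨fun n _ => hdvd n, n₀, α n₀, hn₀⟩

/-- `K` compact group, `ψ` continuous endomorphism, `U` open normal subgroup,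
`C_n = ⋂_{i=0}^{n-1} ψ^{-i}(U)`, `α_n = [C_n : C_{n+1}]`.  Then `α_{n+1} ∣ α_n` for all
`n > 0`; in particular the sequence `(α_n)` is eventually constant. -/
theorem statement5 {K : Type*} [Group K] [TopologicalSpace K] [IsTopologicalGroup K]
    [CompactSpace K]
    (ψ : Monoid.End K) (hψ : Continuous ψ)
    (U : Subgroup K) [U.Normal] (hU : IsOpen (U : Set K))
    (α : ℕ → ℕ)
    (hα : ∀ n : ℕ,
      α n = ((⨅ i ∈ Finset.range (n + 1), U.comap (ψ ^ i : K →* K) : Subgroup K).relIndex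
        (⨅ i ∈ Finset.range n, U.comap (ψ ^ i : K →* K) : Subgroup K))) :
    (∀ n : ℕ, 0 < n → α (n + 1) ∣ α n) ∧
    ∃ n₀ : ℕ, ∃ a : ℕ, ∀ n ≥ n₀, α n = a :=
  statement5_general ψ U α hα
end

section
/- Let K be a compact group, ψ: K → K a topological automorphism, and U an open normal subgroup of K. Then H_top(ψ^{-1},U) = H_top(ψ,U). -/
/-!
The automorphism `ψⁿ` maps `C_{n+1}(ψ, U)` onto `C_{n+1}(ψ⁻¹, U)`, because `ψⁱ ∘ ψ⁻ⁿ = (ψ⁻¹)ⁿ⁻ⁱ`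
and `i ↦ n - i` permutes `{0, …, n}`. Hence both cotrajectories have the same index for every `n`,
and the two sequences `log [K : C_n] / n` coincide.
-/

open Filter Topology

namespace MulAut

variable {G : Type*} [Group G]

/-- The subgroup `C_n(ψ, U) = ⋂_{i < n} ψ⁻ⁱ(U)`. -/
def cotrajectory (ψ : MulAut G) (U : Subgroup G) (n : ℕ) : Subgroup G :=
  ⨅ i ∈ Finset.range n, U.comap ((ψ ^ i : MulAut G) : G →* G)

theorem mem_cotrajectory {ψ : MulAut G} {U : Subgroup G} {n : ℕ} {x : G} :
    x ∈ cotrajectory ψ U n ↔ ∀ i < n, (ψ ^ i) x ∈ U := by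
  simp [cotrajectory]

theorem map_pow_cotrajectory (ψ : MulAut G) (U : Subgroup G) (n : ℕ) :
    (cotrajectory ψ U (n + 1)).map ((ψ ^ n : MulAut G) : G →* G) = cotrajectory ψ⁻¹ U (n + 1) := by
  ext x
  have hpow : ∀ i ≤ n, (ψ ^ i) ((ψ ^ n).symm x) = (ψ⁻¹ ^ (n - i)) x := fun i hi => by
    obtain ⟨k, rfl⟩ := Nat.exists_eq_add_of_le hi
    rw [Nat.add_sub_cancel_left, ← inv_def, ← mul_apply]
    congr 1
    group
  refine Subgroup.mem_map_equiv.trans ?_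
  rw [mem_cotrajectory, mem_cotrajectory]
  constructor
  · intro h i hi
    have := h (n - i) (by omega)
    rwa [hpow (n - i) (by omega), Nat.sub_sub_self (by omega)] at this
  · intro h i hi
    rw [hpow i (by omega)]
    exact h (n - i) (by omega)

theorem index_cotrajectory_inv (ψ : MulAut G) (U : Subgroup G) (n : ℕ) :
    (cotrajectory ψ⁻¹ U n).index = (cotrajectory ψ U n).index := by
  cases n with
  | zero => simp [cotrajectory]
  | succ n => rw [← map_pow_cotrajectory, Subgroup.index_map_equiv]

end MulAut

theorem statement7_general {K : Type*} [Group K]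
    (ψ : MulAut K)
    (U : Subgroup K)
    (L : ℝ)
    (hL : Tendsto
      (fun n : ℕ =>
        Real.log ((⨅ i ∈ Finset.range n, U.comap ((ψ ^ i : MulAut K) : K →* K) :
          Subgroup K).index) / n)
      atTop (𝓝 L)) :
    Tendsto
      (fun n : ℕ =>
        Real.log ((⨅ i ∈ Finset.range n, U.comap (((ψ⁻¹ : MulAut K) ^ i : MulAut K) : K →* K) :
          Subgroup K).index) / n)
      atTop (𝓝 L) :=
  hL.congr fun n =>
    congrArg (fun m : ℕ => Real.log m / n) (MulAut.index_cotrajectory_inv ψ U n).symm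

/-- `K` compact group, `ψ` a topological automorphism, `U` open normal subgroup.
Then `H_top(ψ⁻¹,U) = H_top(ψ,U)`: if `lim_n log[K : C_n(ψ,U)]/n = L` then also
`lim_n log[K : C_n(ψ⁻¹,U)]/n = L`. -/
theorem statement7 {K : Type*} [Group K] [TopologicalSpace K] [IsTopologicalGroup K]
    [CompactSpace K]
    (ψ : MulAut K) (hψ : Continuous ψ) (hψ' : Continuous (ψ⁻¹ : MulAut K))
    (U : Subgroup K) [U.Normal] (hU : IsOpen (U : Set K))
    (L : ℝ)
    (hL : Tendsto
      (fun n : ℕ =>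
        Real.log ((⨅ i ∈ Finset.range n, U.comap ((ψ ^ i : MulAut K) : K →* K) :
          Subgroup K).index) / n)
      atTop (𝓝 L)) :
    Tendsto
      (fun n : ℕ =>
        Real.log ((⨅ i ∈ Finset.range n, U.comap (((ψ⁻¹ : MulAut K) ^ i : MulAut K) : K →* K) :
          Subgroup K).index) / n)
      atTop (𝓝 L) :=
  statement7_general ψ U L hL
end

section
/- Let K be a totally disconnected compact group, ψ: K → K a continuous endomorphism, and U an open normal subgroup of K such that K/(Im ψ · C(ψ,U)) is finite. Then H_top(ψ,U) = log[ψ^{-1}(C(ψ,U)) : C(ψ,U)] − log[K : Im ψ · C(ψ,U)]. -/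
/-!
The partial cotrajectories satisfy `C_{n+1} = U ⊓ ψ⁻¹ C_n`, whence
`[K : C_{n+1}] = [U : U ⊓ ψ⁻¹ C_n] · [K : ψ⁻¹ C_n]` and
`[K : ψ⁻¹ C_n] = [Im ψ · C_n : C_n]`.
By compactness, the decreasing chains `Im ψ · C_n` and `U · ψ⁻¹ C_n` have intersections
`Im ψ · C` and `U · ψ⁻¹ C`; these have finite index, so both chains stabilise. From then on
`[K : C_{n+1}] · [K : Im ψ · C] = [ψ⁻¹ C : C] · [K : C_n]`, so `log [K : C_n]` is eventually
an arithmetic progression with the claimed common difference.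
-/

open Filter Topology

open Finset in
theorem tendsto_div_natCast_of_eventually_add_eq {x : ℕ → ℝ} {d : ℝ}
    (h : ∀ᶠ n in atTop, x (n + 1) = x n + d) :
    Tendsto (fun n : ℕ => x n / n) atTop (𝓝 d) := by
  have hdiff : Tendsto (fun n => x (n + 1) - x n) atTop (𝓝 d) :=
    tendsto_const_nhds.congr' (h.mono fun n hn => by simp [hn])
  have hsplit : (fun n : ℕ => x n / n) =
      fun n : ℕ => x 0 / n + (n⁻¹ : ℝ) * ∑ i ∈ range n, (x (i + 1) - x i) := by
    ext n
    rw [sum_range_sub]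
    ring
  rw [hsplit, ← zero_add d]
  exact (tendsto_const_div_atTop_nhds_zero_nat _).add hdiff.cesaro

theorem tendsto_log_div_of_eventually_mul_eq {a : ℕ → ℕ} {t u : ℕ} (ha : ∀ n, a n ≠ 0)
    (ht : t ≠ 0) (h : ∀ᶠ n in atTop, a (n + 1) * t = u * a n) :
    Tendsto (fun n : ℕ => Real.log (a n) / n) atTop (𝓝 (Real.log u - Real.log t)) := by
  have hu : u ≠ 0 := by
    obtain ⟨n, hn⟩ := h.exists
    rintro rfl
    simp [ha, ht] at hn
  refine tendsto_div_natCast_of_eventually_add_eq (h.mono fun n hn => ?_)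
  have hlog := congrArg (fun m : ℕ => Real.log m) hn
  simp only [Nat.cast_mul] at hlog
  rw [Real.log_mul (by simpa using ha _) (by simpa using ht),
    Real.log_mul (by simpa using hu) (by simpa using ha _)] at hlog
  linarith

namespace Subgroup

variable {G : Type*} [Group G]

theorem eventually_eq_iInf_of_antitone {S : ℕ → Subgroup G} (hS : Antitone S)
    (hfin : (⨅ n, S n).index ≠ 0) : ∀ᶠ n in atTop, S n = ⨅ n, S n := by
  have : (⨅ n, S n).FiniteIndex := ⟨hfin⟩
  have hfi : ∀ n, (S n).FiniteIndex := fun n => finiteIndex_of_le (iInf_le S n)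
  have hbdd : BddAbove (Set.range fun n => (S n).index) :=
    ⟨_, by rintro _ ⟨n, rfl⟩; exact index_antitone (iInf_le S n)⟩
  obtain ⟨N, hN⟩ := Nat.sSup_mem (Set.range_nonempty _) hbdd
  have hconst : ∀ n ≥ N, S n = S N := fun n hn =>
    (hS hn).eq_of_not_lt fun hlt =>
      (index_strictAnti hlt).not_ge ((le_csSup hbdd ⟨n, rfl⟩).trans_eq hN.symm)
  have hN_le : S N ≤ ⨅ n, S n := le_iInf fun m =>
    (le_total m N).elim (fun h => hS h) fun h => (hconst m h).ge
  filter_upwards [eventually_ge_atTop N] with n hn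
  rw [hconst n hn]
  exact le_antisymm hN_le (iInf_le S N)

variable [TopologicalSpace G] [IsTopologicalGroup G]

theorem iInf_sup_eq_sup_iInf_of_antitone {A : Subgroup G} (hA : IsCompact (A : Set G))
    {B : ℕ → Subgroup G} [∀ n, (B n).Normal] (hB : ∀ n, IsClosed (B n : Set G))
    (hBanti : Antitone B) : ⨅ n, (A ⊔ B n) = A ⊔ ⨅ n, B n := by
  refine le_antisymm (fun x hx => ?_) (le_iInf fun n => sup_le_sup_left (iInf_le B n) A)
  rw [mem_iInf] at hx
  set t : ℕ → Set G := fun n => {a | a⁻¹ * x ∈ B n}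
  have ht : ∀ n, IsClosed (t n) := fun n =>
    (hB n).preimage (continuous_inv.mul continuous_const)
  have hfinite : ∀ s : Finset ℕ, ((A : Set G) ∩ ⋂ i ∈ s, t i).Nonempty := by
    intro s
    obtain ⟨a, ha, b, hb, rfl⟩ := mem_sup_of_normal_right.mp (hx (s.sup id))
    refine ⟨a, ha, Set.mem_iInter₂.mpr fun i hi => hBanti (Finset.le_sup (f := id) hi) ?_⟩
    simpa [t] using hb
  obtain ⟨a, ha, hat⟩ := hA.inter_iInter_nonempty t ht hfinite
  rw [← mul_inv_cancel_left a x]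
  exact mul_mem (mem_sup_left ha) (mem_sup_right (mem_iInf.mpr fun n => Set.mem_iInter.mp hat n))

end Subgroup

namespace Monoid.End

variable {K : Type*} [Group K] (ψ : Monoid.End K) (U : Subgroup K)

def partialCotrajectory (n : ℕ) : Subgroup K :=
  ⨅ i ∈ Finset.range n, U.comap (ψ ^ i : K →* K)

def cotrajectory : Subgroup K := ⨅ i : ℕ, U.comap (ψ ^ i : K →* K)

variable {ψ U}

theorem mem_partialCotrajectory {n : ℕ} {x : K} :
    x ∈ ψ.partialCotrajectory U n ↔ ∀ i < n, ψ^[i] x ∈ U := by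
  simp only [partialCotrajectory, Subgroup.mem_iInf, Finset.mem_range]
  rfl

theorem mem_cotrajectory {x : K} : x ∈ ψ.cotrajectory U ↔ ∀ i, ψ^[i] x ∈ U := by
  simp only [cotrajectory, Subgroup.mem_iInf]
  rfl

variable (ψ U)

theorem partialCotrajectory_zero : ψ.partialCotrajectory U 0 = ⊤ := by
  simp [partialCotrajectory]

theorem partialCotrajectory_succ (n : ℕ) :
    ψ.partialCotrajectory U (n + 1) = U ⊓ (ψ.partialCotrajectory U n).comap ψ := by
  ext x
  rw [mem_partialCotrajectory, Nat.forall_lt_succ_left]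
  exact and_congr Iff.rfl mem_partialCotrajectory.symm

theorem cotrajectory_eq_inf_comap :
    ψ.cotrajectory U = U ⊓ (ψ.cotrajectory U).comap ψ := by
  ext x
  rw [mem_cotrajectory, ← Nat.and_forall_add_one]
  exact and_congr Iff.rfl mem_cotrajectory.symm

theorem iInf_partialCotrajectory : ⨅ n, ψ.partialCotrajectory U n = ψ.cotrajectory U := by
  ext x
  simp only [Subgroup.mem_iInf, mem_partialCotrajectory, mem_cotrajectory]
  exact ⟨fun h i => h (i + 1) i i.lt_add_one, fun h _ i _ => h i⟩

theorem antitone_partialCotrajectory : Antitone (ψ.partialCotrajectory U) :=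
  fun _ _ hmn _ hx => mem_partialCotrajectory.mpr fun i hi =>
    mem_partialCotrajectory.mp hx i (hi.trans_le hmn)

instance [U.Normal] (n : ℕ) : (ψ.partialCotrajectory U n).Normal := by
  induction n with
  | zero => rw [partialCotrajectory_zero]; infer_instance
  | succ n ih =>
    rw [partialCotrajectory_succ]
    have := ih.comap (ψ : K →* K)
    infer_instance

variable [TopologicalSpace K]

theorem isOpen_partialCotrajectory (hψ : Continuous ψ) (hU : IsOpen (U : Set K)) (n : ℕ) :
    IsOpen (ψ.partialCotrajectory U n : Set K) := by
  induction n with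
  | zero => simp [partialCotrajectory_zero]
  | succ n ih =>
    rw [partialCotrajectory_succ]
    exact hU.inter (ih.preimage hψ)

variable [IsTopologicalGroup K] [CompactSpace K]

theorem index_partialCotrajectory_ne_zero (hψ : Continuous ψ) (hU : IsOpen (U : Set K))
    (n : ℕ) : (ψ.partialCotrajectory U n).index ≠ 0 :=
  have := (ψ.partialCotrajectory U n).quotient_finite_of_isOpen
    (isOpen_partialCotrajectory ψ U hψ hU n)
  Subgroup.index_ne_zero_of_finite

variable [U.Normal]

theorem eventually_range_sup_partialCotrajectory (hψ : Continuous ψ) (hU : IsOpen (U : Set K))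
    (hfin : ((ψ : K →* K).range ⊔ ψ.cotrajectory U).index ≠ 0) :
    ∀ᶠ n in atTop, (ψ : K →* K).range ⊔ ψ.partialCotrajectory U n =
      (ψ : K →* K).range ⊔ ψ.cotrajectory U := by
  have hinf := Subgroup.iInf_sup_eq_sup_iInf_of_antitone (A := (ψ : K →* K).range)
    ((ψ : K →* K).coe_range ▸ isCompact_range hψ)
    (fun n => (ψ.partialCotrajectory U n).isClosed_of_isOpen
      (isOpen_partialCotrajectory ψ U hψ hU n))
    (antitone_partialCotrajectory ψ U)
  rw [iInf_partialCotrajectory] at hinf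
  rw [← hinf] at hfin ⊢
  exact Subgroup.eventually_eq_iInf_of_antitone
    (fun _ _ hmn => sup_le_sup_left (antitone_partialCotrajectory ψ U hmn) _) hfin

theorem eventually_sup_comap_partialCotrajectory (hψ : Continuous ψ) (hU : IsOpen (U : Set K)) :
    ∀ᶠ n in atTop, U ⊔ (ψ.partialCotrajectory U n).comap ψ =
      U ⊔ (ψ.cotrajectory U).comap ψ := by
  have hinf := Subgroup.iInf_sup_eq_sup_iInf_of_antitone (U.isClosed_of_isOpen hU).isCompact
    (fun n => ((ψ.partialCotrajectory U n).isClosed_of_isOpen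
      (isOpen_partialCotrajectory ψ U hψ hU n)).preimage hψ)
    (fun _ _ hmn => Subgroup.comap_mono (antitone_partialCotrajectory ψ U hmn))
  have hcomap : ⨅ n, (ψ.partialCotrajectory U n).comap ψ = (ψ.cotrajectory U).comap ψ := by
    rw [← iInf_partialCotrajectory]
    exact (Subgroup.comap_iInf (ψ : K →* K) _).symm
  rw [hcomap] at hinf
  have hfin : (U ⊔ (ψ.cotrajectory U).comap ψ).index ≠ 0 :=
    have := U.quotient_finite_of_isOpen hU
    ne_zero_of_dvd_ne_zero Subgroup.index_ne_zero_of_finite (Subgroup.index_dvd_of_le le_sup_left)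
  rw [← hinf] at hfin ⊢
  exact Subgroup.eventually_eq_iInf_of_antitone
    (fun _ _ hmn => sup_le_sup_left
      (Subgroup.comap_mono (antitone_partialCotrajectory ψ U hmn)) _) hfin

theorem eventually_index_partialCotrajectory_succ_mul (hψ : Continuous ψ)
    (hU : IsOpen (U : Set K)) (hfin : ((ψ : K →* K).range ⊔ ψ.cotrajectory U).index ≠ 0) :
    ∀ᶠ n in atTop, (ψ.partialCotrajectory U (n + 1)).index *
        ((ψ : K →* K).range ⊔ ψ.cotrajectory U).index =
      (ψ.cotrajectory U).relIndex ((ψ.cotrajectory U).comap ψ) *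
        (ψ.partialCotrajectory U n).index := by
  filter_upwards [eventually_range_sup_partialCotrajectory ψ U hψ hU hfin,
    eventually_sup_comap_partialCotrajectory ψ U hψ hU] with n hrange hsup
  set Cn := ψ.partialCotrajectory U n
  have hrelIndex : U.relIndex (Cn.comap ψ) =
      (ψ.cotrajectory U).relIndex ((ψ.cotrajectory U).comap ψ) := by
    rw [← Subgroup.relIndex_sup_left, hsup, Subgroup.relIndex_sup_left,
      ← Subgroup.inf_relIndex_right, ← cotrajectory_eq_inf_comap]
  have hindex : (Cn.comap ψ).index * ((ψ : K →* K).range ⊔ ψ.cotrajectory U).index =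
      Cn.index := by
    rw [Subgroup.index_comap (f := (ψ : K →* K)), ← Subgroup.relIndex_sup_right, hrange]
    exact Subgroup.relIndex_mul_index (hrange ▸ le_sup_right)
  have hsucc : (ψ.partialCotrajectory U (n + 1)).index =
      U.relIndex (Cn.comap ψ) * (Cn.comap ψ).index := by
    rw [partialCotrajectory_succ, ← Subgroup.inf_relIndex_right,
      Subgroup.relIndex_mul_index inf_le_right]
  rw [hsucc, mul_assoc, hindex, hrelIndex]

end Monoid.End

theorem statement9_general {K : Type*} [Group K] [TopologicalSpace K] [IsTopologicalGroup K]
    [CompactSpace K]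
    (ψ : Monoid.End K) (hψ : Continuous ψ)
    (U : Subgroup K) [U.Normal] (hU : IsOpen (U : Set K))
    (C : Subgroup K) (hC : C = ⨅ i : ℕ, U.comap (ψ ^ i : K →* K))
    (hfin : ((ψ : K →* K).range ⊔ C).index ≠ 0) :
    Tendsto
      (fun n : ℕ =>
        Real.log ((⨅ i ∈ Finset.range n, U.comap (ψ ^ i : K →* K) : Subgroup K).index) / n)
      atTop
      (𝓝 (Real.log (C.relIndex (C.comap (ψ : K →* K))) -
        Real.log (((ψ : K →* K).range ⊔ C).index))) := by
  subst hC
  exact tendsto_log_div_of_eventually_mul_eq (ψ.index_partialCotrajectory_ne_zero U hψ hU) hfin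
    (ψ.eventually_index_partialCotrajectory_succ_mul U hψ hU hfin)

/-- Topological Formula: `K` totally disconnected compact group, `ψ` continuous
endomorphism, `U` open normal subgroup with `K/(Im ψ · C(ψ,U))` finite, where
`C(ψ,U) = ⋂_{n≥0} ψ^{-n}(U)`.  Then
`H_top(ψ,U) = log[ψ^{-1}(C(ψ,U)) : C(ψ,U)] − log[K : Im ψ · C(ψ,U)]`. -/
theorem statement9 {K : Type*} [Group K] [TopologicalSpace K] [IsTopologicalGroup K]
    [CompactSpace K] [TotallyDisconnectedSpace K]
    (ψ : Monoid.End K) (hψ : Continuous ψ)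
    (U : Subgroup K) [U.Normal] (hU : IsOpen (U : Set K))
    (C : Subgroup K) (hC : C = ⨅ i : ℕ, U.comap (ψ ^ i : K →* K))
    (hfin : ((ψ : K →* K).range ⊔ C).index ≠ 0) :
    Tendsto
      (fun n : ℕ =>
        Real.log ((⨅ i ∈ Finset.range n, U.comap (ψ ^ i : K →* K) : Subgroup K).index) / n)
      atTop
      (𝓝 (Real.log (C.relIndex (C.comap (ψ : K →* K))) -
        Real.log (((ψ : K →* K).range ⊔ C).index))) :=
  statement9_general ψ hψ U hU C hC hfin
end

section
/- Let G be a torsion abelian group, φ: G → G an endomorphism, and F a finite subgroup of G. Then ker φ ∩ T(φ,F) is finite, where T(φ,F) = ⋃_{n≥1} (F + φ(F) + … + φ^{n-1}(F)) is the smallest φ-invariant subgroup of G containing F. -/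
/-!
Let `T n = F + φ F + ⋯ + φ^(n-1) F`, so that `T (n + 1) = F + φ (T n)`. Restricting `φ` to the
finite group `T n` gives `|T n| = |ker φ ∩ T n| · |φ (T n)|`, while
`|T n| ≤ |T (n + 1)| ≤ |F| · |φ (T n)|`; hence `|ker φ ∩ T n| ≤ |F|` for every `n`. An increasing
union of finite sets of uniformly bounded size is finite.
-/

theorem Set.finite_iUnion_of_directed_of_ncard_le {α ι : Type*} [Nonempty ι] {s : ι → Set α}
    (hdir : Directed (· ⊆ ·) s) (hfin : ∀ i, (s i).Finite) {N : ℕ} (hN : ∀ i, (s i).ncard ≤ N) :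
    (⋃ i, s i).Finite := by
  by_contra hinf
  obtain ⟨t, hts, ht⟩ := Set.Infinite.exists_subset_card_eq hinf (N + 1)
  obtain ⟨i, hti⟩ := hdir.exists_mem_subset_of_finset_subset_biUnion hts
  have := (Set.ncard_le_ncard hti (hfin i)).trans (hN i)
  rw [Set.ncard_coe_finset, ht] at this
  omega

namespace AddSubgroup

theorem card_ker_inf_mul_card_map {G H : Type*} [AddGroup G] [AddGroup H] (f : G →+ H)
    (A : AddSubgroup G) : Nat.card (f.ker ⊓ A : AddSubgroup G) * Nat.card (A.map f) =
      Nat.card A := by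
  rw [← (f.domRestrict A).ker.card_mul_index, index_ker, AddMonoidHom.domRestrict_range,
    AddMonoidHom.ker_domRestrict, ← inf_addSubgroupOf_right,
    Nat.card_congr (addSubgroupOfEquivOfLe inf_le_right).toEquiv]

theorem finite_map {G H : Type*} [AddGroup G] [AddGroup H] (f : G →+ H) {A : AddSubgroup G}
    (hA : (A : Set G).Finite) : (A.map f : Set H).Finite := by
  rw [coe_map]
  exact hA.image f

variable {G : Type*} [AddCommGroup G]

theorem card_sup_le (A B : AddSubgroup G) :
    Nat.card (A ⊔ B : AddSubgroup G) ≤ Nat.card A * Nat.card B := by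
  change Nat.card ((A ⊔ B : AddSubgroup G) : Set G) ≤ _
  rw [add_normal]
  exact Set.natCard_add_le

theorem finite_sup {A B : AddSubgroup G} (hA : (A : Set G).Finite) (hB : (B : Set G).Finite) :
    ((A ⊔ B : AddSubgroup G) : Set G).Finite := by
  rw [add_normal]
  exact hA.add hB

end AddSubgroup

open AddSubgroup

section Trajectory

variable {G : Type*} [AddCommGroup G] (φ : AddMonoid.End G) (F : AddSubgroup G)

def trajectory : ℕ → AddSubgroup G
  | 0 => ⊥
  | n + 1 => F ⊔ (trajectory n).map (φ : G →+ G)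

theorem trajectory_mono : Monotone (trajectory φ F) := by
  refine monotone_nat_of_le_succ fun n => ?_
  induction n with
  | zero => exact bot_le
  | succ n ih => exact sup_le_sup_left (map_mono ih) F

theorem map_pow_le_trajectory (i : ℕ) : F.map (φ ^ i : G →+ G) ≤ trajectory φ F (i + 1) := by
  induction i with
  | zero => exact (map_id F).le.trans le_sup_left
  | succ i ih =>
    rw [pow_succ']
    exact (map_map F (φ : G →+ G) (φ ^ i)).ge.trans (le_sup_of_le_right (map_mono ih))

variable {F}

theorem trajectory_finite (hF : (F : Set G).Finite) (n : ℕ) :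
    (trajectory φ F n : Set G).Finite := by
  induction n with
  | zero => exact Set.finite_singleton 0
  | succ n ih => exact finite_sup hF (finite_map _ ih)

theorem card_ker_inf_trajectory_le (hF : (F : Set G).Finite) (n : ℕ) :
    Nat.card ((φ : G →+ G).ker ⊓ trajectory φ F n : AddSubgroup G) ≤ Nat.card F := by
  set M := (trajectory φ F n).map (φ : G →+ G)
  have : Finite (trajectory φ F (n + 1)) := (trajectory_finite φ hF (n + 1)).to_subtype
  have : Finite M := (finite_map _ (trajectory_finite φ hF n)).to_subtype
  refine Nat.le_of_mul_le_mul_right ?_ (Nat.card_pos (α := M))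
  calc Nat.card ((φ : G →+ G).ker ⊓ trajectory φ F n : AddSubgroup G) * Nat.card M
      = Nat.card (trajectory φ F n) := card_ker_inf_mul_card_map _ _
    _ ≤ Nat.card (trajectory φ F (n + 1)) := card_le_of_le (trajectory_mono φ F n.le_succ)
    _ ≤ Nat.card F * Nat.card M := card_sup_le F M

end Trajectory

theorem statement14_general {G : Type*} [AddCommGroup G]
    (φ : AddMonoid.End G) (F : AddSubgroup G) (hFfin : (F : Set G).Finite) :
    (((φ : G →+ G).ker ⊓ ⨆ i : ℕ, F.map (φ ^ i : G →+ G) : AddSubgroup G) : Set G).Finite := by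
  have hT : (⨆ i : ℕ, F.map (φ ^ i : G →+ G)) ≤ ⨆ n, trajectory φ F n :=
    iSup_le fun i => le_iSup_of_le (i + 1) (map_pow_le_trajectory φ F i)
  have hmono : Monotone fun n => ((φ : G →+ G).ker ∩ trajectory φ F n : Set G) :=
    fun m n hmn => Set.inter_subset_inter_right _ (trajectory_mono φ F hmn)
  refine (Set.finite_iUnion_of_directed_of_ncard_le hmono.directed_le
    (fun n => (trajectory_finite φ hFfin n).inter_of_right _)
    (card_ker_inf_trajectory_le φ hFfin)).subset ?_
  rw [← Set.inter_iUnion, ← coe_iSup_of_directed (trajectory_mono φ F).directed_le]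
  exact Set.inter_subset_inter_right _ hT

/-- `G` torsion abelian group, `φ` an endomorphism, `F` a finite subgroup.
Then `ker φ ∩ T(φ,F)` is finite, where `T(φ,F) = ⨆ i, φ^i(F)` is the smallest `φ`-invariant
subgroup containing `F`. -/
theorem statement14 {G : Type*} [AddCommGroup G] (hTor : AddMonoid.IsTorsion G)
    (φ : AddMonoid.End G) (F : AddSubgroup G) (hFfin : (F : Set G).Finite) :
    (((φ : G →+ G).ker ⊓ ⨆ i : ℕ, F.map (φ ^ i : G →+ G) : AddSubgroup G) : Set G).Finite :=
  statement14_general φ F hFfin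
end
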